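/- arXiv:2411.17633 — 3 statements merged into one kernel-verified Lean document; each statement's English description precedes it below -/
import Mathlib

section
/- Let v : ℝ → [0,∞) be a Lebesgue measurable function with L¹({v>0}) < ∞, such that {v^∧ = 0} does not essentially disconnect {v > 0}. Then a point x ∈ ℝ satisfies v^∧(x) > 0 if and only if both L¹((-∞,x) ∩ {v>0}) > 0 and L¹((x,∞) ∩ {v>0}) > 0. -/
/-!
If `v^∧(x) > 0`, then `x` is a density-one point of some `{v > s}` with `s > 0`, and a
density-one point of a subset of `ℝ` sees positive measure on both sides. Conversely, if
`{v > 0}` has positive measure on both sides of `x` but `v^∧(x) = 0`, cutting `{v > 0}` at `x`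
essentially disconnects it: the essential boundary of a set lies in its closure, so the two
halves can only share the interface point `x`, which belongs to `{v^∧ = 0}`.
-/

open MeasureTheory Metric Set Filter Topology ENNReal NNReal

noncomputable section

/-- The set of points where the measurable set `A` has `n`-dimensional density `t`. -/
def densityPt {X : Type*} [MetricSpace X] [MeasureSpace X] (A : Set X) (t : ℝ≥0∞) : Set X :=
  {x | Tendsto (fun ρ : ℝ => volume (A ∩ ball x ρ) / volume (ball x ρ)) (𝓝[>] 0) (𝓝 t)}

/-- The essential boundary `∂ᵉA = X \ (A^(0) ∪ A^(1))`. -/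
def essBoundary {X : Type*} [MetricSpace X] [MeasureSpace X] (A : Set X) : Set X :=
  (densityPt A 0 ∪ densityPt A 1)ᶜ

/-- Approximate lower limit `f^∧(x) = sup {t : x ∈ {f > t}^(1)}`. -/
def apLower {X : Type*} [MetricSpace X] [MeasureSpace X] (f : X → ℝ) (x : X) : EReal :=
  sSup {t : EReal | ∃ s : ℝ, t = (s : EReal) ∧ x ∈ densityPt {y | s < f y} 1}

/-- Approximate upper limit `f^∨(x) = inf {t : x ∈ {f > t}^(0)}`. -/
def apUpper {X : Type*} [MetricSpace X] [MeasureSpace X] (f : X → ℝ) (x : X) : EReal :=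
  sInf {t : EReal | ∃ s : ℝ, t = (s : EReal) ∧ x ∈ densityPt {y | s < f y} 0}

/-- `K` essentially disconnects `G`: there is a nontrivial Borel partition `{Gp, Gm}` of `G`
with `μH[d]((G^(1) ∩ ∂ᵉGp ∩ ∂ᵉGm) \ K) = 0`, where `d` is the codimension-one exponent. -/
def essentiallyDisconnects {X : Type*} [MetricSpace X] [MeasureSpace X] [BorelSpace X]
    (d : ℝ) (K G : Set X) : Prop :=
  ∃ Gp Gm : Set X, MeasurableSet Gp ∧ MeasurableSet Gm ∧
    volume (Gp ∩ Gm) = 0 ∧ volume (symmDiff G (Gp ∪ Gm)) = 0 ∧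
    0 < volume Gp ∧ 0 < volume Gm ∧
    μH[d] ((densityPt G 1 ∩ essBoundary Gp ∩ essBoundary Gm) \ K) = 0

section MetricMeasure

variable {X : Type*} [MetricSpace X] [MeasureSpace X]

lemma mem_densityPt_zero_of_disjoint_ball {A : Set X} {y : X} {ε : ℝ} (hε : 0 < ε)
    (h : Disjoint A (ball y ε)) : y ∈ densityPt A 0 := by
  refine tendsto_const_nhds.congr' ?_
  filter_upwards [Ioo_mem_nhdsGT hε] with ρ hρ
  rw [(h.mono_right (ball_subset_ball hρ.2.le)).inter_eq, measure_empty, ENNReal.zero_div]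

lemma essBoundary_subset_closure (A : Set X) : essBoundary A ⊆ closure A := by
  intro y hy
  by_contra hyA
  obtain ⟨ε, hε, hball⟩ := Metric.isOpen_iff.mp isClosed_closure.isOpen_compl y hyA
  exact hy (Or.inl (mem_densityPt_zero_of_disjoint_ball hε
    ((subset_compl_iff_disjoint_left.mp hball).mono_left subset_closure)))

lemma notMem_densityPt_one_of_le_half {A : Set X} {x : X}
    (h : ∀ᶠ ρ in 𝓝[>] 0, volume (A ∩ ball x ρ) ≤ 2⁻¹ * volume (ball x ρ)) :
    x ∉ densityPt A 1 := by
  intro hx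
  have : (1 : ℝ≥0∞) ≤ 2⁻¹ := le_of_tendsto hx (h.mono fun ρ hρ => ENNReal.div_le_of_le_mul hρ)
  norm_num at this

variable [ProperSpace X] [IsFiniteMeasureOnCompacts (volume : Measure X)]
  [(volume : Measure X).IsOpenPosMeasure]

lemma mem_densityPt_univ_one (x : X) : x ∈ densityPt univ 1 := by
  refine tendsto_const_nhds.congr' ?_
  filter_upwards [self_mem_nhdsWithin] with ρ hρ
  rw [univ_inter, ENNReal.div_self (measure_ball_pos _ _ hρ).ne' measure_ball_lt_top.ne]

lemma apLower_nonneg {f : X → ℝ} (hf : ∀ y, 0 ≤ f y) (x : X) : 0 ≤ apLower f x := by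
  by_contra! hneg
  obtain ⟨s, hs, hs0⟩ := EReal.exists_between_coe_real hneg
  refine hs.not_ge (le_sSup ⟨s, rfl, ?_⟩)
  convert mem_densityPt_univ_one x
  exact eq_univ_of_forall fun y => (EReal.coe_lt_coe_iff.mp hs0).trans_le (hf y)

end MetricMeasure

lemma exists_mem_densityPt_one_of_lt_apLower {X : Type*} [MetricSpace X] [MeasureSpace X]
    {f : X → ℝ} {x : X} {t : ℝ} (h : (t : EReal) < apLower f x) :
    ∃ s : ℝ, t < s ∧ x ∈ densityPt {y | s < f y} 1 := by
  obtain ⟨_, ⟨s, rfl, hs⟩, hts⟩ := lt_sSup_iff.mp h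
  exact ⟨s, EReal.coe_lt_coe_iff.mp hts, hs⟩

lemma ofReal_eq_inv_two_mul_volume_ball (x ρ : ℝ) :
    ENNReal.ofReal ρ = 2⁻¹ * volume (ball x ρ) := by
  rw [Real.volume_ball, ENNReal.ofReal_mul zero_le_two,
    ENNReal.ofReal_ofNat, ← mul_assoc, ENNReal.inv_mul_cancel two_ne_zero ENNReal.ofNat_ne_top,
    one_mul]

lemma volume_Iio_inter_pos_of_mem_densityPt_one {A : Set ℝ} {x : ℝ}
    (hx : x ∈ densityPt A 1) : 0 < volume (Iio x ∩ A) := by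
  refine pos_iff_ne_zero.mpr fun h0 => notMem_densityPt_one_of_le_half ?_ hx
  filter_upwards [self_mem_nhdsWithin] with ρ (hρ : 0 < ρ)
  calc volume (A ∩ ball x ρ) ≤ volume (Iio x ∩ A ∪ Ico x (x + ρ)) := by
        refine measure_mono fun z ⟨hzA, hzb⟩ => ?_
        rw [Real.ball_eq_Ioo] at hzb
        rcases lt_or_ge z x with hzx | hzx
        · exact Or.inl ⟨hzx, hzA⟩
        · exact Or.inr ⟨hzx, hzb.2⟩
    _ ≤ volume (Iio x ∩ A) + volume (Ico x (x + ρ)) := measure_union_le _ _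
    _ = 2⁻¹ * volume (ball x ρ) := by rw [h0, zero_add, Real.volume_Ico, add_sub_cancel_left,
          ofReal_eq_inv_two_mul_volume_ball]

lemma volume_Ioi_inter_pos_of_mem_densityPt_one {A : Set ℝ} {x : ℝ}
    (hx : x ∈ densityPt A 1) : 0 < volume (Ioi x ∩ A) := by
  refine pos_iff_ne_zero.mpr fun h0 => notMem_densityPt_one_of_le_half ?_ hx
  filter_upwards [self_mem_nhdsWithin] with ρ (hρ : 0 < ρ)
  calc volume (A ∩ ball x ρ) ≤ volume (Ioi x ∩ A ∪ Ioc (x - ρ) x) := by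
        refine measure_mono fun z ⟨hzA, hzb⟩ => ?_
        rw [Real.ball_eq_Ioo] at hzb
        rcases le_or_gt z x with hzx | hzx
        · exact Or.inr ⟨hzb.1, hzx⟩
        · exact Or.inl ⟨hzx, hzA⟩
    _ ≤ volume (Ioi x ∩ A) + volume (Ioc (x - ρ) x) := measure_union_le _ _
    _ = 2⁻¹ * volume (ball x ρ) := by
        rw [h0, zero_add, Real.volume_Ioc, _root_.sub_sub_cancel,
          ofReal_eq_inv_two_mul_volume_ball]

lemma essentiallyDisconnects_of_volume_Iio_inter_pos_of_volume_Ioi_inter_pos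
    {K G : Set ℝ} {x : ℝ} (d : ℝ) (hG : MeasurableSet G) (hxK : x ∈ K)
    (hlt : 0 < volume (Iio x ∩ G)) (hgt : 0 < volume (Ioi x ∩ G)) :
    essentiallyDisconnects d K G := by
  refine ⟨Iio x ∩ G, Ioi x ∩ G, measurableSet_Iio.inter hG, measurableSet_Ioi.inter hG,
    ?_, ?_, hlt, hgt, ?_⟩
  · refine measure_mono_null (inter_subset_inter inter_subset_left inter_subset_left) ?_
    rw [Iio_inter_Ioi, Ioo_self, measure_empty]
  · refine measure_mono_null (fun y hy => ?_) (measure_singleton x)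
    rw [← union_inter_distrib_right, Iio_union_Ioi] at hy
    simp only [mem_symmDiff, mem_inter_iff, mem_compl_iff, mem_singleton_iff] at hy ⊢
    tauto
  · suffices h : densityPt G 1 ∩ essBoundary (Iio x ∩ G) ∩ essBoundary (Ioi x ∩ G) ⊆ K by
      rw [sdiff_eq_empty.mpr h, measure_empty]
    rintro y ⟨⟨-, hy_lt⟩, hy_gt⟩
    have hyx : y ∈ closure (Iio x) :=
      closure_mono inter_subset_left (essBoundary_subset_closure _ hy_lt)
    have hxy : y ∈ closure (Ioi x) :=
      closure_mono inter_subset_left (essBoundary_subset_closure _ hy_gt)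
    rw [closure_Iio, mem_Iic] at hyx
    rw [closure_Ioi, mem_Ici] at hxy
    exact le_antisymm hyx hxy ▸ hxK

theorem statement0_general (v : ℝ → ℝ) (hmeas : Measurable v) (hnonneg : ∀ x, 0 ≤ v x)
    (hconn : ¬ essentiallyDisconnects 0 {x | apLower v x = 0} {x | 0 < v x}) :
    ∀ x : ℝ, 0 < apLower v x ↔
      0 < volume (Iio x ∩ {y | 0 < v y}) ∧ 0 < volume (Ioi x ∩ {y | 0 < v y}) := by
  intro x
  constructor
  · intro hpos
    obtain ⟨s, hs, hx⟩ := exists_mem_densityPt_one_of_lt_apLower (t := 0) (by exact_mod_cast hpos)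
    have hsub : {y | s < v y} ⊆ {y | 0 < v y} := fun y hy => hs.trans hy
    exact ⟨(volume_Iio_inter_pos_of_mem_densityPt_one hx).trans_le
        (measure_mono (inter_subset_inter_right _ hsub)),
      (volume_Ioi_inter_pos_of_mem_densityPt_one hx).trans_le
        (measure_mono (inter_subset_inter_right _ hsub))⟩
  · rintro ⟨hlt, hgt⟩
    by_contra hle
    have hx0 : apLower v x = 0 := le_antisymm (not_lt.mp hle) (apLower_nonneg hnonneg x)
    exact hconn (essentiallyDisconnects_of_volume_Iio_inter_pos_of_volume_Ioi_inter_pos 0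
      (measurableSet_lt measurable_const hmeas) hx0 hlt hgt)

/-- Let `v : ℝ → [0,∞)` be Lebesgue measurable with `ℒ¹({v>0}) < ∞`, such
that `{v^∧ = 0}` does not essentially disconnect `{v > 0}`. Then `v^∧(x) > 0` iff both
`ℒ¹((-∞,x) ∩ {v>0}) > 0` and `ℒ¹((x,∞) ∩ {v>0}) > 0`. -/
theorem statement0 (v : ℝ → ℝ) (hmeas : Measurable v) (hnonneg : ∀ x, 0 ≤ v x)
    (hfin : volume {x | 0 < v x} < ⊤)
    (hconn : ¬ essentiallyDisconnects 0 {x | apLower v x = 0} {x | 0 < v x}) :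
    ∀ x : ℝ, 0 < apLower v x ↔
      0 < volume (Iio x ∩ {y | 0 < v y}) ∧ 0 < volume (Ioi x ∩ {y | 0 < v y}) :=
  statement0_general v hmeas hnonneg hconn
end
end

section
/- Let v : ℝ → [0,∞) be a Lebesgue measurable function with L¹({v>0}) < ∞, such that {v^∧ = 0} does not essentially disconnect {v > 0}. If x, y ∈ {v^∧ > 0} with x < y, then every z ∈ (x, y) satisfies v^∧(z) > 0. -/
open MeasureTheory Metric Set Filter Topology ENNReal NNReal

noncomputable section

lemma densityPt_univ (x : ℝ) : x ∈ densityPt (Set.univ : Set ℝ) 1 := by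
  have h : ∀ᶠ ρ : ℝ in 𝓝[>] 0,
      volume ((Set.univ : Set ℝ) ∩ ball x ρ) / volume (ball x ρ) = 1 := by
    filter_upwards [self_mem_nhdsWithin] with ρ (hρ : 0 < ρ)
    rw [Set.univ_inter, ENNReal.div_self (measure_ball_pos volume x hρ).ne' measure_ball_lt_top.ne]
  exact tendsto_const_nhds.congr' (h.mono fun ρ hρ => hρ.symm)

lemma densityPt_zero_of_disjoint (A : Set ℝ) (w r : ℝ) (hr : 0 < r)
    (h : Disjoint A (ball w r)) : w ∈ densityPt A 0 := by
  have h2 : ∀ᶠ ρ : ℝ in 𝓝[>] 0, volume (A ∩ ball w ρ) / volume (ball w ρ) = 0 := by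
    filter_upwards [Ioo_mem_nhdsGT_of_mem ⟨le_refl 0, hr⟩] with ρ hρ
    have : A ∩ ball w ρ = ∅ := (h.mono_right (ball_subset_ball hρ.2.le)).inter_eq
    simp [this]
  exact tendsto_const_nhds.congr' (h2.mono fun ρ hρ => hρ.symm)

lemma exists_pos_vol (A : Set ℝ) (x r : ℝ) (hr : 0 < r) (h : x ∈ densityPt A 1) :
    ∃ ρ : ℝ, 0 < ρ ∧ ρ < r ∧ volume (A ∩ ball x ρ) ≠ 0 := by
  have h1 : ∀ᶠ ρ : ℝ in 𝓝[>] 0,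
      volume (A ∩ ball x ρ) / volume (ball x ρ) ≠ 0 :=
    h.eventually_ne one_ne_zero
  have h2 : Ioo (0:ℝ) r ∈ 𝓝[>] (0:ℝ) := Ioo_mem_nhdsGT_of_mem ⟨le_refl 0, hr⟩
  obtain ⟨ρ, hρ1, hρ2⟩ := (h1.and (eventually_of_mem h2 fun a ha => ha)).exists
  refine ⟨ρ, hρ2.1, hρ2.2, fun h0 => hρ1 ?_⟩
  rw [h0, ENNReal.zero_div]

lemma apLower_nonneg_s1 (v : ℝ → ℝ) (hv : ∀ x, 0 ≤ v x) (x : ℝ) : 0 ≤ apLower v x := by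
  refine le_of_forall_lt fun c hc => ?_
  obtain ⟨s, hcs, hs0⟩ := EReal.exists_between_coe_real hc
  have hmem : (s : EReal) ∈ {t : EReal | ∃ r : ℝ, t = (r : EReal) ∧
      x ∈ densityPt {y | r < v y} 1} := by
    refine ⟨s, rfl, ?_⟩
    have : {y : ℝ | s < v y} = Set.univ := by
      ext w; simp only [Set.mem_setOf_eq, Set.mem_univ, iff_true]
      have := hv w
      have hs : (s : ℝ) < 0 := by exact_mod_cast hs0
      linarith
    rw [this]
    exact densityPt_univ x
  exact lt_of_lt_of_le hcs (le_sSup hmem)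

/-- From `0 < apLower v x` extract a level `s > 0` with density 1 of `{v > s}` at `x`. -/
lemma exists_level (v : ℝ → ℝ) (x : ℝ) (hx : 0 < apLower v x) :
    ∃ s : ℝ, 0 < s ∧ x ∈ densityPt {y | s < v y} 1 := by
  simp only [apLower, lt_sSup_iff] at hx
  obtain ⟨t, ⟨s, rfl, hden⟩, hts⟩ := hx
  exact ⟨s, by exact_mod_cast hts, hden⟩

/-- Let `v : ℝ → [0,∞)` be Lebesgue measurable with `ℒ¹({v>0}) < ∞`, such
that `{v^∧ = 0}` does not essentially disconnect `{v > 0}`. If `x, y ∈ {v^∧ > 0}` with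
`x < y`, then every `z ∈ (x,y)` satisfies `v^∧(z) > 0`. -/
theorem statement1 (v : ℝ → ℝ) (hmeas : Measurable v) (hnonneg : ∀ x, 0 ≤ v x)
    (hfin : volume {x | 0 < v x} < ⊤)
    (hconn : ¬ essentiallyDisconnects 0 {x | apLower v x = 0} {x | 0 < v x})
    (x y : ℝ) (hx : 0 < apLower v x) (hy : 0 < apLower v y) (hxy : x < y) :
    ∀ z ∈ Ioo x y, 0 < apLower v z := by
  intro z hz
  by_contra hle
  push_neg at hle
  have hz0 : apLower v z = 0 := le_antisymm hle (apLower_nonneg_s1 v hnonneg z)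
  apply hconn
  set G : Set ℝ := {x | 0 < v x} with hG
  set Gp : Set ℝ := G ∩ Iio z with hGp
  set Gm : Set ℝ := G ∩ Ioi z with hGm
  have hGmeas : MeasurableSet G := hmeas measurableSet_Ioi
  refine ⟨Gp, Gm, hGmeas.inter measurableSet_Iio, hGmeas.inter measurableSet_Ioi, ?_, ?_, ?_, ?_, ?_⟩
  · have : Gp ∩ Gm = ∅ := by
      ext w
      simp only [hGp, hGm, Set.mem_inter_iff, Set.mem_Iio, Set.mem_Ioi, Set.mem_empty_iff_false,
        iff_false]
      rintro ⟨⟨-, h1⟩, -, h2⟩; linarith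
    simp [this]
  · refine measure_mono_null (t := {z}) (fun w hw => ?_) Real.volume_singleton
    rw [Set.mem_symmDiff] at hw
    simp only [Set.mem_singleton_iff]
    rcases hw with ⟨hwG, hw2⟩ | ⟨hw1, hw2⟩
    · by_contra hne
      rcases lt_or_gt_of_ne hne with h | h
      · exact hw2 (Or.inl ⟨hwG, h⟩)
      · exact hw2 (Or.inr ⟨hwG, h⟩)
    · exact absurd (hw1.elim (fun h => h.1) fun h => h.1) hw2
  · obtain ⟨s, hs, hden⟩ := exists_level v x hx
    obtain ⟨ρ, hρ0, hρlt, hvol⟩ := exists_pos_vol _ x (z - x) (by linarith [hz.1]) hden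
    have hsub : {y | s < v y} ∩ ball x ρ ⊆ Gp := by
      rintro w ⟨hw1, hw2⟩
      rw [Real.ball_eq_Ioo] at hw2
      have h1 : s < v w := hw1
      exact ⟨by simp only [hG, Set.mem_setOf_eq]; linarith, by
        simp only [Set.mem_Iio]; have := hw2.2; linarith⟩
    exact lt_of_lt_of_le (pos_iff_ne_zero.2 hvol) (measure_mono hsub)
  · obtain ⟨s, hs, hden⟩ := exists_level v y hy
    obtain ⟨ρ, hρ0, hρlt, hvol⟩ := exists_pos_vol _ y (y - z) (by linarith [hz.2]) hden
    have hsub : {w | s < v w} ∩ ball y ρ ⊆ Gm := by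
      rintro w ⟨hw1, hw2⟩
      rw [Real.ball_eq_Ioo] at hw2
      have h1 : s < v w := hw1
      exact ⟨by simp only [hG, Set.mem_setOf_eq]; linarith, by
        simp only [Set.mem_Ioi]; have := hw2.1; linarith⟩
    exact lt_of_lt_of_le (pos_iff_ne_zero.2 hvol) (measure_mono hsub)
  · have hbd : essBoundary Gp ∩ essBoundary Gm ⊆ {z} := by
      intro w ⟨hwp, hwm⟩
      simp only [Set.mem_singleton_iff]
      by_contra hne
      rcases lt_or_gt_of_ne hne with h | h
      · refine hwm (Or.inl (densityPt_zero_of_disjoint Gm w (z - w) (by linarith) ?_))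
        rw [Set.disjoint_left]
        intro a ha hab
        rw [Real.ball_eq_Ioo] at hab
        have : z < a := ha.2
        have := hab.2
        linarith
      · refine hwp (Or.inl (densityPt_zero_of_disjoint Gp w (w - z) (by linarith) ?_))
        rw [Set.disjoint_left]
        intro a ha hab
        rw [Real.ball_eq_Ioo] at hab
        have : a < z := ha.2
        have := hab.1
        linarith
    refine measure_mono_null (fun w hw => ?_) (measure_empty (μ := μH[(0:ℝ)]))
    obtain ⟨⟨⟨-, hwp⟩, hwm⟩, hwK⟩ := hw
    have hwz : w = z := hbd ⟨hwp, hwm⟩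
    exact absurd (by rw [hwz]; exact hz0) hwK
end
end

section
/- Let v : ℝ → [0,∞) be a Lebesgue measurable function with L¹({v > 0}) < ∞, such that {v^∧ = 0} does not essentially disconnect {v > 0}. Then there exists an open bounded interval (a,b) ⊂ ℝ such that {v^∧ > 0} = (a,b). -/
open MeasureTheory Metric Set Filter Topology ENNReal NNReal

noncomputable section

/-! The set `I = {v^∧ > 0}` is the union of the sets `{v > s}^(1)`, `s > 0`, so it lies a.e. in
`{v > 0}` and has finite measure. A point of density one of `E ⊆ ℝ` sees positive measure of `E`
on each side, hence further density points of `E` on each side, so `I` has neither a least nor a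
greatest element. If `x < c < y` with `x, y ∈ I` but `c ∉ I`, then `v^∧(c) = 0`, and cutting
`{v > 0}` at `c` gives a nontrivial partition whose essential boundaries can only meet at
`c ∈ {v^∧ = 0}`: `{v^∧ = 0}` would essentially disconnect `{v > 0}`. So `I` is an interval of
finite length without endpoints. -/

section DensityPoints

variable {X : Type*} [MetricSpace X] [MeasureSpace X]

lemma densityPt_mono {A B : Set X} (h : A ⊆ B) : densityPt A 1 ⊆ densityPt B 1 := by
  intro x hx
  refine tendsto_of_tendsto_of_tendsto_of_le_of_le' hx tendsto_const_nhds
    (Eventually.of_forall fun r => ?_) (Eventually.of_forall fun r => ?_)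
  · exact ENNReal.div_le_div_right (measure_mono (inter_subset_inter_left _ h)) _
  · exact ENNReal.div_le_of_le_mul (by rw [one_mul]; exact measure_mono inter_subset_right)

lemma mem_densityPt_zero_of_notMem_closure {A : Set X} {z : X} (hz : z ∉ closure A) :
    z ∈ densityPt A 0 := by
  obtain ⟨ε, hε, hball⟩ := Metric.isOpen_iff.1 isClosed_closure.isOpen_compl z hz
  refine tendsto_const_nhds.congr' ?_
  filter_upwards [Ioo_mem_nhdsGT hε] with r hr
  have hA : A ∩ ball z r = ∅ := eq_empty_of_forall_notMem fun w ⟨hwA, hwz⟩ =>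
    hball (ball_subset_ball hr.2.le hwz) (subset_closure hwA)
  rw [hA, measure_empty, ENNReal.zero_div]

lemma apLower_pos_iff {f : X → ℝ} {x : X} :
    0 < apLower f x ↔ ∃ s : ℝ, 0 < s ∧ x ∈ densityPt {y | s < f y} 1 := by
  constructor
  · rw [apLower, lt_sSup_iff]
    rintro ⟨_, ⟨s, rfl, hs⟩, hpos⟩
    exact ⟨s, EReal.coe_pos.1 hpos, hs⟩
  · rintro ⟨s, hs, hsx⟩
    exact (EReal.coe_pos.2 hs).trans_le (le_sSup ⟨s, rfl, hsx⟩)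

end DensityPoints

lemma volume_inter_closedBall (s : Set ℝ) (x r : ℝ) :
    volume (s ∩ closedBall x r) = volume (s ∩ ball x r) := by
  rw [Real.closedBall_eq_Icc, Real.ball_eq_Ioo]
  exact measure_congr ((ae_eq_refl s).inter Ioo_ae_eq_Icc.symm)

lemma densityPt_one_ae_eq {s : Set ℝ} (hs : MeasurableSet s) : densityPt s 1 =ᵐ[volume] s := by
  filter_upwards [Besicovitch.ae_tendsto_measure_inter_div_of_measurableSet volume hs] with x hx
  have hx : Tendsto (fun r : ℝ => volume (s ∩ ball x r) / volume (ball x r)) (𝓝[>] 0)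
      (𝓝 (s.indicator 1 x)) := by
    simpa only [volume_inter_closedBall, Real.volume_closedBall, Real.volume_ball] using hx
  by_cases hxs : x ∈ s
  · rw [indicator_of_mem hxs] at hx
    exact propext (iff_of_true hx hxs)
  · rw [indicator_of_notMem hxs] at hx
    exact propext (iff_of_false (fun h1 => one_ne_zero (tendsto_nhds_unique h1 hx)) hxs)

lemma exists_mem_densityPt_one {s : Set ℝ} (hs : MeasurableSet s) (h : volume s ≠ 0) :
    ∃ x ∈ s, x ∈ densityPt s 1 := by
  have hpos : volume (s ∩ densityPt s 1) ≠ 0 := by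
    rwa [measure_congr ((ae_eq_refl s).inter (densityPt_one_ae_eq hs)), inter_self]
  exact nonempty_of_measure_ne_zero hpos

lemma notMem_densityPt_one_of_eventually_le {E : Set ℝ} {c : ℝ}
    (h : ∀ᶠ r in 𝓝[>] 0, volume (E ∩ ball c r) ≤ ENNReal.ofReal r) : c ∉ densityPt E 1 := by
  intro hc
  have hhalf : ∀ᶠ r in 𝓝[>] (0 : ℝ), volume (E ∩ ball c r) / volume (ball c r) ≤ 2⁻¹ := by
    filter_upwards [h] with r hr
    refine ENNReal.div_le_of_le_mul (hr.trans_eq ?_)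
    rw [Real.volume_ball, ENNReal.ofReal_mul zero_le_two, ENNReal.ofReal_ofNat, ← mul_assoc,
      ENNReal.inv_mul_cancel two_ne_zero ENNReal.ofNat_ne_top, one_mul]
  have hle : (1 : ℝ≥0∞) ≤ 2⁻¹ := le_of_tendsto hc hhalf
  norm_num at hle

lemma measure_inter_Iio_pos {E : Set ℝ} {c : ℝ} (hc : c ∈ densityPt E 1) :
    0 < volume (E ∩ Iio c) := by
  refine pos_iff_ne_zero.2 fun h0 => notMem_densityPt_one_of_eventually_le ?_ hc
  filter_upwards with r
  have hsub : E ∩ ball c r ⊆ E ∩ Iio c ∪ Ico c (c + r) := by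
    rintro y ⟨hyE, hy⟩
    rw [Real.ball_eq_Ioo] at hy
    rcases lt_or_ge y c with hyc | hcy
    exacts [Or.inl ⟨hyE, hyc⟩, Or.inr ⟨hcy, hy.2⟩]
  calc volume (E ∩ ball c r) ≤ volume (E ∩ Iio c ∪ Ico c (c + r)) := measure_mono hsub
    _ ≤ volume (E ∩ Iio c) + volume (Ico c (c + r)) := measure_union_le _ _
    _ = ENNReal.ofReal r := by rw [h0, zero_add, Real.volume_Ico, add_sub_cancel_left]

lemma measure_inter_Ioi_pos {E : Set ℝ} {c : ℝ} (hc : c ∈ densityPt E 1) :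
    0 < volume (E ∩ Ioi c) := by
  refine pos_iff_ne_zero.2 fun h0 => notMem_densityPt_one_of_eventually_le ?_ hc
  filter_upwards with r
  have hsub : E ∩ ball c r ⊆ E ∩ Ioi c ∪ Ioc (c - r) c := by
    rintro y ⟨hyE, hy⟩
    rw [Real.ball_eq_Ioo] at hy
    rcases lt_or_ge c y with hcy | hyc
    exacts [Or.inl ⟨hyE, hcy⟩, Or.inr ⟨hy.1, hyc⟩]
  calc volume (E ∩ ball c r) ≤ volume (E ∩ Ioi c ∪ Ioc (c - r) c) := measure_mono hsub
    _ ≤ volume (E ∩ Ioi c) + volume (Ioc (c - r) c) := measure_union_le _ _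
    _ = ENNReal.ofReal r := by rw [h0, zero_add, Real.volume_Ioc, _root_.sub_sub_cancel]

lemma exists_lt_mem_densityPt_one {E : Set ℝ} (hE : MeasurableSet E) {c : ℝ}
    (hc : c ∈ densityPt E 1) : ∃ x < c, x ∈ densityPt E 1 := by
  obtain ⟨x, ⟨-, hxc⟩, hx⟩ :=
    exists_mem_densityPt_one (hE.inter measurableSet_Iio) (measure_inter_Iio_pos hc).ne'
  exact ⟨x, hxc, densityPt_mono inter_subset_left hx⟩

lemma exists_gt_mem_densityPt_one {E : Set ℝ} (hE : MeasurableSet E) {c : ℝ}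
    (hc : c ∈ densityPt E 1) : ∃ x > c, x ∈ densityPt E 1 := by
  obtain ⟨x, ⟨-, hxc⟩, hx⟩ :=
    exists_mem_densityPt_one (hE.inter measurableSet_Ioi) (measure_inter_Ioi_pos hc).ne'
  exact ⟨x, hxc, densityPt_mono inter_subset_left hx⟩

lemma mem_densityPt_one_univ (x : ℝ) : x ∈ densityPt (univ : Set ℝ) 1 := by
  refine tendsto_const_nhds.congr' ?_
  filter_upwards [self_mem_nhdsWithin] with r (hr : 0 < r)
  rw [univ_inter, ENNReal.div_self (measure_ball_pos volume x hr).ne' measure_ball_lt_top.ne]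

lemma le_apLower_of_forall_le {f : ℝ → ℝ} {m : ℝ} (hm : ∀ y, m ≤ f y) (x : ℝ) :
    (m : EReal) ≤ apLower f x := by
  refine le_of_forall_lt_imp_le_of_dense fun a ha => ?_
  obtain ⟨s, has, hsm⟩ := EReal.exists_between_coe_real ha
  have huniv : {y | s < f y} = univ :=
    eq_univ_of_forall fun y => (EReal.coe_lt_coe_iff.1 hsm).trans_le (hm y)
  exact has.le.trans (le_sSup ⟨s, rfl, huniv ▸ mem_densityPt_one_univ x⟩)

lemma essentiallyDisconnects_of_cut {K G : Set ℝ} (d : ℝ) (hG : MeasurableSet G) {c : ℝ}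
    (hcK : c ∈ K) (hl : 0 < volume (G ∩ Iio c)) (hr : 0 < volume (G ∩ Ioi c)) :
    essentiallyDisconnects d K G := by
  refine ⟨G ∩ Iio c, G ∩ Ioi c, hG.inter measurableSet_Iio, hG.inter measurableSet_Ioi, ?_, ?_,
    hl, hr, ?_⟩
  · exact measure_mono_null (fun z ⟨⟨_, (hzc : z < c)⟩, _, (hcz : c < z)⟩ => lt_asymm hzc hcz) measure_empty
  · refine measure_mono_null (fun z hz => ?_) (measure_singleton c)
    rw [← inter_union_distrib_left, Iio_union_Ioi, Set.symmDiff_def] at hz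
    rcases hz with ⟨hzG, hz⟩ | ⟨⟨hzG, -⟩, hz⟩
    · by_contra hzc
      exact hz ⟨hzG, hzc⟩
    · exact absurd hzG hz
  · refine measure_mono_null (fun z ⟨⟨⟨_, hzl⟩, hzr⟩, hzK⟩ => ?_) measure_empty
    rcases lt_trichotomy z c with hzc | rfl | hcz
    · refine hzr (Or.inl (mem_densityPt_zero_of_notMem_closure fun hz => hzc.not_ge ?_))
      exact closure_minimal (inter_subset_right.trans Ioi_subset_Ici_self) isClosed_Ici hz
    · exact hzK hcK
    · refine hzl (Or.inl (mem_densityPt_zero_of_notMem_closure fun hz => hcz.not_ge ?_))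
      exact closure_minimal (inter_subset_right.trans Iio_subset_Iic_self) isClosed_Iic hz

section ApLowerPositive

variable {v : ℝ → ℝ}

lemma setOf_apLower_pos_subset_densityPt :
    {x | 0 < apLower v x} ⊆ densityPt {x | 0 < v x} 1 := fun _ hx =>
  let ⟨_, hs, hsx⟩ := apLower_pos_iff.1 hx
  densityPt_mono (fun _ hy => hs.trans hy) hsx

lemma exists_lt_apLower_pos (hv : Measurable v) {c : ℝ} (hc : 0 < apLower v c) :
    ∃ x < c, 0 < apLower v x := by
  obtain ⟨s, hs, hsc⟩ := apLower_pos_iff.1 hc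
  obtain ⟨x, hxc, hx⟩ := exists_lt_mem_densityPt_one (measurableSet_lt measurable_const hv) hsc
  exact ⟨x, hxc, apLower_pos_iff.2 ⟨s, hs, hx⟩⟩

lemma exists_gt_apLower_pos (hv : Measurable v) {c : ℝ} (hc : 0 < apLower v c) :
    ∃ x > c, 0 < apLower v x := by
  obtain ⟨s, hs, hsc⟩ := apLower_pos_iff.1 hc
  obtain ⟨x, hxc, hx⟩ := exists_gt_mem_densityPt_one (measurableSet_lt measurable_const hv) hsc
  exact ⟨x, hxc, apLower_pos_iff.2 ⟨s, hs, hx⟩⟩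

lemma ordConnected_setOf_apLower_pos (hv : Measurable v) (hnonneg : ∀ x, 0 ≤ v x) {d : ℝ}
    (hconn : ¬ essentiallyDisconnects d {x | apLower v x = 0} {x | 0 < v x}) :
    OrdConnected {x | 0 < apLower v x} := by
  refine ⟨fun x hx y hy c hc => ?_⟩
  by_contra hcI
  have hcK : apLower v c = 0 :=
    le_antisymm (not_lt.1 hcI) (by exact_mod_cast le_apLower_of_forall_le hnonneg c)
  obtain ⟨s, hs, hsx⟩ := apLower_pos_iff.1 hx
  obtain ⟨t, ht, hty⟩ := apLower_pos_iff.1 hy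
  refine hconn (essentiallyDisconnects_of_cut d (measurableSet_lt measurable_const hv) hcK ?_ ?_)
  · exact (measure_inter_Iio_pos hsx).trans_le
      (measure_mono (inter_subset_inter (fun _ hz => hs.trans hz) (Iio_subset_Iio hc.1)))
  · exact (measure_inter_Ioi_pos hty).trans_le
      (measure_mono (inter_subset_inter (fun _ hz => ht.trans hz) (Ioi_subset_Ioi hc.2)))

end ApLowerPositive

namespace Set.OrdConnected

variable {S : Set ℝ}

lemma bddAbove_of_volume_ne_top (hS : S.OrdConnected) (hfin : volume S ≠ ⊤) : BddAbove S := by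
  by_contra hb
  obtain ⟨x, hx⟩ := nonempty_of_not_bddAbove hb
  have hsub : Ici x ⊆ S := fun z hz =>
    let ⟨y, hy, hzy⟩ := not_bddAbove_iff.1 hb z
    hS.out hx hy ⟨hz, hzy.le⟩
  exact hfin (top_unique ((Real.volume_Ici (a := x)).symm.trans_le (measure_mono hsub)))

lemma bddBelow_of_volume_ne_top (hS : S.OrdConnected) (hfin : volume S ≠ ⊤) : BddBelow S := by
  by_contra hb
  obtain ⟨x, hx⟩ := nonempty_of_not_bddBelow hb
  have hsub : Iic x ⊆ S := fun z hz =>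
    let ⟨y, hy, hyz⟩ := not_bddBelow_iff.1 hb z
    hS.out hy hx ⟨hyz.le, hz⟩
  exact hfin (top_unique ((Real.volume_Iic (a := x)).symm.trans_le (measure_mono hsub)))

lemma eq_Ioo_csInf_csSup (hS : S.OrdConnected) (hb : BddBelow S) (ha : BddAbove S)
    (hlt : ∀ c ∈ S, ∃ x < c, x ∈ S) (hgt : ∀ c ∈ S, ∃ y > c, y ∈ S) :
    S = Ioo (sInf S) (sSup S) := by
  rcases S.eq_empty_or_nonempty with rfl | hne
  · simp
  refine Subset.antisymm (fun c hc => ?_) (IsConnected.Ioo_csInf_csSup_subset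
    ⟨hne, hS.isPreconnected⟩ hb ha)
  obtain ⟨x, hxc, hx⟩ := hlt c hc
  obtain ⟨y, hcy, hy⟩ := hgt c hc
  exact ⟨(csInf_le hb hx).trans_lt hxc, hcy.trans_le (le_csSup ha hy)⟩

end Set.OrdConnected

/-- Let `v : ℝ → [0,∞)` be Lebesgue measurable with `ℒ¹({v>0}) < ∞`, such
that `{v^∧ = 0}` does not essentially disconnect `{v > 0}`. Then there exists an open
bounded interval `(a,b) ⊂ ℝ` with `{v^∧ > 0} = (a,b)`. -/
theorem statement2 (v : ℝ → ℝ) (hmeas : Measurable v) (hnonneg : ∀ x, 0 ≤ v x)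
    (hfin : volume {x | 0 < v x} < ⊤)
    (hconn : ¬ essentiallyDisconnects 0 {x | apLower v x = 0} {x | 0 < v x}) :
    ∃ a b : ℝ, {x | 0 < apLower v x} = Ioo a b := by
  have hI : OrdConnected {x | 0 < apLower v x} :=
    ordConnected_setOf_apLower_pos hmeas hnonneg hconn
  have hIfin : volume {x | 0 < apLower v x} ≠ ⊤ := by
    refine ((measure_mono setOf_apLower_pos_subset_densityPt).trans_lt ?_).ne
    rwa [measure_congr (densityPt_one_ae_eq (measurableSet_lt measurable_const hmeas))]
  exact ⟨_, _, hI.eq_Ioo_csInf_csSup (hI.bddBelow_of_volume_ne_top hIfin)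
    (hI.bddAbove_of_volume_ne_top hIfin) (fun _ => exists_lt_apLower_pos hmeas)
    (fun _ => exists_gt_apLower_pos hmeas)⟩
end
end
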